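/- arXiv:1202.0411 — 2 statements merged into one kernel-verified Lean document; each statement's English description precedes it below -/
import Mathlib

section
/- In a cartesian differential category, the strengths of the tangent bundle monad commute up to the distributivity isomorphism: σ ∘ T(t_{X,Y}) ∘ t'_{X,TY} = T(t'_{X,Y}) ∘ t_{TX,Y} : TX×TY → TT(X×Y). -/
open CategoryTheory

universe v u

/-- Hom-sets carry a commutative additive monoid structure. -/
class HomAdd (C : Type u) [Category.{v} C] where
  homMonoid : ∀ X Y : C, AddCommMonoid (X ⟶ Y)

attribute [instance] HomAdd.homMonoid

/-- A morphism is additive if it preserves the additive structure under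
precomposition. -/
def IsAdditive {C : Type u} [Category.{v} C] [HomAdd C] {X Y : C} (f : X ⟶ Y) : Prop :=
  (∀ {W : C} (g h : W ⟶ X), (g + h) ≫ f = g ≫ f + h ≫ f) ∧
  (∀ {W : C}, (0 : W ⟶ X) ≫ f = 0)

/-- A cartesian left-additive category: a category with chosen finite products,
hom-sets commutative monoids, composition is left-additive (precomposition
preserves sums), projections are additive, and pairings of additive
morphisms are additive. -/
class CLAC (C : Type u) [Category.{v} C] extends HomAdd C where
  P : C → C → C
  p1 : ∀ {X Y : C}, P X Y ⟶ X
  p2 : ∀ {X Y : C}, P X Y ⟶ Y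
  pair : ∀ {Z X Y : C}, (Z ⟶ X) → (Z ⟶ Y) → (Z ⟶ P X Y)
  pair_fst : ∀ {Z X Y : C} (f : Z ⟶ X) (g : Z ⟶ Y), pair f g ≫ p1 = f
  pair_snd : ∀ {Z X Y : C} (f : Z ⟶ X) (g : Z ⟶ Y), pair f g ≫ p2 = g
  pair_ext : ∀ {Z X Y : C} (h k : Z ⟶ P X Y),
    h ≫ p1 = k ≫ p1 → h ≫ p2 = k ≫ p2 → h = k
  one : C
  bang : ∀ X : C, X ⟶ one
  bang_unique : ∀ {X : C} (f : X ⟶ one), f = bang X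
  comp_add : ∀ {X Y Z : C} (f : X ⟶ Y) (g h : Y ⟶ Z),
    f ≫ (g + h) = f ≫ g + f ≫ h
  comp_zero : ∀ {X Y Z : C} (f : X ⟶ Y), f ≫ (0 : Y ⟶ Z) = 0
  p1_additive : ∀ {X Y : C}, IsAdditive (p1 (X := X) (Y := Y))
  p2_additive : ∀ {X Y : C}, IsAdditive (p2 (X := X) (Y := Y))
  pair_additive : ∀ {Z X Y : C} (f : Z ⟶ X) (g : Z ⟶ Y),
    IsAdditive f → IsAdditive g → IsAdditive (pair f g)

namespace CLAC

variable {C : Type u} [Category.{v} C] [CLAC C]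

/-- The product of two morphisms, `f × g = ⟨f ∘ π₁, g ∘ π₂⟩`. -/
def prodMor {W X Y Z : C} (f : W ⟶ Y) (g : X ⟶ Z) : P W X ⟶ P Y Z :=
  pair (p1 ≫ f) (p2 ≫ g)

end CLAC

open CLAC

/-- A cartesian differential category: a cartesian left-additive category
equipped with a differential operator `D` satisfying axioms D1–D7. -/
class CDC (C : Type u) [Category.{v} C] extends CLAC C where
  D : ∀ {X Y : C}, (X ⟶ Y) → (P X X ⟶ Y)
  D1 : ∀ {X Y : C} (f g : X ⟶ Y), D (f + g) = D f + D g
  D1' : ∀ {X Y : C}, D (0 : X ⟶ Y) = 0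
  D2 : ∀ {W X Y : C} (f : X ⟶ Y) (h k v : W ⟶ X),
    pair (h + k) v ≫ D f = pair h v ≫ D f + pair k v ≫ D f
  D2' : ∀ {W X Y : C} (f : X ⟶ Y) (v : W ⟶ X), pair 0 v ≫ D f = 0
  D3 : ∀ {X : C}, D (𝟙 X) = p1
  D3₁ : ∀ {X Y : C}, D (p1 (X := X) (Y := Y)) = p1 ≫ p1
  D3₂ : ∀ {X Y : C}, D (p2 (X := X) (Y := Y)) = p1 ≫ p2
  D4 : ∀ {Z X Y : C} (f : Z ⟶ X) (g : Z ⟶ Y), D (pair f g) = pair (D f) (D g)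
  D5 : ∀ {X Y Z : C} (g : X ⟶ Y) (f : Y ⟶ Z),
    D (g ≫ f) = pair (D g) (p2 ≫ g) ≫ D f
  D6 : ∀ {W X Y : C} (f : X ⟶ Y) (g h k : W ⟶ X),
    pair (pair g 0) (pair h k) ≫ D (D f) = pair g k ≫ D f
  D7 : ∀ {W X Y : C} (f : X ⟶ Y) (g h k : W ⟶ X),
    pair (pair 0 h) (pair g k) ≫ D (D f) = pair (pair 0 g) (pair h k) ≫ D (D f)

namespace CDC

variable {C : Type u} [Category.{v} C] [CDC C]

/-- The tangent bundle functor on morphisms: `T(f) = ⟨D(f), f ∘ π₂⟩`. -/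
def Tm {X Y : C} (f : X ⟶ Y) : P X X ⟶ P Y Y :=
  pair (D f) (p2 ≫ f)

/-- The unit `η_X = ⟨0, id⟩ : X ⟶ TX`. -/
def η (X : C) : X ⟶ P X X := pair 0 (𝟙 X)

/-- The multiplication `μ_X = ⟨π₂∘π₁ + π₁∘π₂, π₂∘π₂⟩ : TTX ⟶ TX`. -/
def μ (X : C) : P (P X X) (P X X) ⟶ P X X :=
  pair (p1 ≫ p2 + p2 ≫ p1) (p2 ≫ p2)

/-- The (right) tensorial strength `t_{X,Y} = ⟨⟨0, π₁∘π₂⟩, ⟨π₁, π₂∘π₂⟩⟩`. -/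
def t (X Y : C) : P X (P Y Y) ⟶ P (P X Y) (P X Y) :=
  pair (pair 0 (p2 ≫ p1)) (pair p1 (p2 ≫ p2))

/-- The left tensorial strength `t'_{X,Y} = ⟨⟨π₁∘π₁, 0⟩, ⟨π₂∘π₁, π₂⟩⟩`. -/
def t' (X Y : C) : P (P X X) Y ⟶ P (P X Y) (P X Y) :=
  pair (pair (p1 ≫ p1) 0) (pair (p1 ≫ p2) p2)

/-- The distributivity isomorphism
`σ = ⟨⟨π₁∘π₁, π₁∘π₂⟩, ⟨π₂∘π₁, π₂∘π₂⟩⟩ : (A×B)×(E×F) ⟶ (A×E)×(B×F)`. -/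
def Sig (A B E F : C) : P (P A B) (P E F) ⟶ P (P A E) (P B F) :=
  pair (pair (p1 ≫ p1) (p2 ≫ p1)) (pair (p1 ≫ p2) (p2 ≫ p2))

/-- The symmetry `c_{X,Y} = ⟨π₂, π₁⟩`. -/
def symm (X Y : C) : P X Y ⟶ P Y X := pair p2 p1

/-- The left unitor `ℓ_X = ⟨!_X, id⟩ : X ⟶ 1 × X`. -/
def lUnit (X : C) : X ⟶ P one X := pair (bang X) (𝟙 X)

/-- The associator `a_{X,Y,Z} = ⟨π₁∘π₁, ⟨π₂∘π₁, π₂⟩⟩`. -/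
def assoc (X Y Z : C) : P (P X Y) Z ⟶ P X (P Y Z) :=
  pair (p1 ≫ p1) (pair (p1 ≫ p2) p2)

/-- The monoidal structure map `ψ_{X,Y} = ⟨π₁×π₁, π₂×π₂⟩ : TX×TY ⟶ T(X×Y)`. -/
def ψ (X Y : C) : P (P X X) (P Y Y) ⟶ P (P X Y) (P X Y) :=
  pair (prodMor p1 p1) (prodMor p2 p2)

end CDC

open CDC

variable {C : Type u} [Category.{v} C] [CDC C]

section Helpers
variable {C : Type u} [Category.{v} C] [CDC C]

@[simp] lemma pfst {Z X Y : C} (f : Z ⟶ X) (g : Z ⟶ Y) : pair f g ≫ p1 = f :=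
  pair_fst f g

@[simp] lemma psnd {Z X Y : C} (f : Z ⟶ X) (g : Z ⟶ Y) : pair f g ≫ p2 = g :=
  pair_snd f g

@[simp] lemma pfst_assoc {Z X Y W : C} (f : Z ⟶ X) (g : Z ⟶ Y) (h : X ⟶ W) :
    pair f g ≫ p1 ≫ h = f ≫ h := by
  rw [← Category.assoc, pair_fst]

@[simp] lemma psnd_assoc {Z X Y W : C} (f : Z ⟶ X) (g : Z ⟶ Y) (h : Y ⟶ W) :
    pair f g ≫ p2 ≫ h = g ≫ h := by
  rw [← Category.assoc, pair_snd]

@[simp] lemma pair_comp {W Z X Y : C} (e : W ⟶ Z) (f : Z ⟶ X) (g : Z ⟶ Y) :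
    e ≫ pair f g = pair (e ≫ f) (e ≫ g) := by
  apply pair_ext <;> simp [Category.assoc]

@[simp] lemma zero_comp_p1 {W X Y : C} : (0 : W ⟶ P X Y) ≫ p1 = 0 :=
  p1_additive.2

@[simp] lemma zero_comp_p2 {W X Y : C} : (0 : W ⟶ P X Y) ≫ p2 = 0 :=
  p2_additive.2

@[simp] lemma comp_zero' {X Y Z : C} (f : X ⟶ Y) : f ≫ (0 : Y ⟶ Z) = 0 :=
  comp_zero f

end Helpers

/-- The strengths commute up to the distributivity isomorphism:
`σ ∘ T(t_{X,Y}) ∘ t'_{X,TY} = T(t'_{X,Y}) ∘ t_{TX,Y}`. -/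
theorem sigma_strengths (X Y : C) :
    t' X (P Y Y) ≫ Tm (t X Y) ≫ Sig (P X Y) (P X Y) (P X Y) (P X Y) =
      t (P X X) Y ≫ Tm (t' X Y) := by
  simp only [Tm, t, t', Sig, D4, D5, D1', D3₁, D3₂, pair_comp, pfst, psnd,
    pfst_assoc, psnd_assoc, zero_comp_p1, zero_comp_p2, comp_zero',
    Category.assoc, Category.comp_id, Category.id_comp]
end

section
/- A cartesian closed differential category is a differential λ-category (i.e., satisfies D(curry(f)) = curry(D(f)∘⟨π₁×0, π₂×id⟩) for all f : Z×X → Y) if and only if every evaluation morphism satisfies ev∘(π₁×id) = D(ev)∘⟨π₁×0, π₂×id⟩ : (X⇒Y)×(X⇒Y))×X → Y. -/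
open CategoryTheory

universe v u

open CLAC

open CDC

variable {C : Type u} [Category.{v} C] [CDC C]

/-- A cartesian closed differential category: a cartesian differential
category with exponentials where currying is additive. -/
class CCDC (C : Type u) [Category.{v} C] extends CDC C where
  exp : C → C → C
  ev : ∀ {X Y : C}, P (exp X Y) X ⟶ Y
  curry : ∀ {Z X Y : C}, (P Z X ⟶ Y) → (Z ⟶ exp X Y)
  uncurry_curry : ∀ {Z X Y : C} (f : P Z X ⟶ Y),
    prodMor (curry f) (𝟙 X) ≫ ev = f
  curry_uncurry : ∀ {Z X Y : C} (g : Z ⟶ exp X Y),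
    curry (prodMor g (𝟙 X) ≫ ev) = g
  curry_add : ∀ {Z X Y : C} (f g : P Z X ⟶ Y), curry (f + g) = curry f + curry g
  curry_zero : ∀ {Z X Y : C}, curry (0 : P Z X ⟶ Y) = 0

open CCDC

section Helpers

variable {C : Type u} [Category.{v} C] [CLAC C]

@[simp] lemma pair_fst_assoc {Z X Y W : C} (f : Z ⟶ X) (g : Z ⟶ Y) (h : X ⟶ W) :
    pair f g ≫ (p1 ≫ h) = f ≫ h := by rw [← Category.assoc, pair_fst]

@[simp] lemma pair_snd_assoc {Z X Y W : C} (f : Z ⟶ X) (g : Z ⟶ Y) (h : Y ⟶ W) :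
    pair f g ≫ (p2 ≫ h) = g ≫ h := by rw [← Category.assoc, pair_snd]

lemma comp_pair {W Z X Y : C} (h : W ⟶ Z) (f : Z ⟶ X) (g : Z ⟶ Y) :
    h ≫ pair f g = pair (h ≫ f) (h ≫ g) :=
  pair_ext _ _ (by rw [Category.assoc, pair_fst, pair_fst])
    (by rw [Category.assoc, pair_snd, pair_snd])

@[simp] lemma comp_pair_assoc {W Z X Y V : C} (h : W ⟶ Z) (f : Z ⟶ X) (g : Z ⟶ Y)
    (k : P X Y ⟶ V) : h ≫ (pair f g ≫ k) = pair (h ≫ f) (h ≫ g) ≫ k := by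
  rw [← Category.assoc, comp_pair]

@[simp] lemma pair_comp_p1_p2 {W X Y : C} (h : W ⟶ P X Y) :
    pair (h ≫ p1) (h ≫ p2) = h :=
  pair_ext _ _ (by rw [pair_fst]) (by rw [pair_snd])

@[simp] lemma pair_p1_p2 {X Y : C} : pair (p1 : P X Y ⟶ X) p2 = 𝟙 _ :=
  pair_ext _ _ (by rw [pair_fst, Category.id_comp])
    (by rw [pair_snd, Category.id_comp])

end Helpers

attribute [local simp] CLAC.pair_fst CLAC.pair_snd CLAC.comp_zero

/-- The main identity in the (⇐) direction. -/
theorem diff_lambda_of_ev {C : Type u} [Category.{v} C] [CCDC C]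
    (hev : ∀ (X Y : C),
        prodMor (p1 : P (exp X Y) (exp X Y) ⟶ exp X Y) (𝟙 X) ≫ ev =
          pair (prodMor p1 (0 : X ⟶ X)) (prodMor p2 (𝟙 X)) ≫
            D (ev (X := X) (Y := Y)))
    (Z X Y : C) (f : P Z X ⟶ Y) :
    D (curry f) =
      curry (pair (prodMor p1 (0 : X ⟶ X)) (prodMor p2 (𝟙 X)) ≫ D f) := by
  set g : Z ⟶ exp X Y := curry f with hg
  have h1 : f = prodMor g (𝟙 X) ≫ ev := (uncurry_curry f).symm
  -- key structural identity
  have hA : pair (prodMor p1 (0 : X ⟶ X)) (prodMor p2 (𝟙 X)) ≫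
        pair (D (prodMor g (𝟙 X))) (p2 ≫ prodMor g (𝟙 X)) =
      prodMor (pair (D g) (p2 ≫ g)) (𝟙 X) ≫
        pair (prodMor p1 (0 : X ⟶ X)) (prodMor p2 (𝟙 X)) := by
    have hD : D (pair (p1 ≫ g) (p2 : P Z X ⟶ X)) =
        pair (pair (p1 ≫ p1) (p2 ≫ p1) ≫ D g) (p1 ≫ p2) := by
      rw [D4, D5, D3₁, D3₂]
    apply pair_ext <;> apply pair_ext <;>
      simp [prodMor, hD, comp_pair, Category.assoc]
  have hB : prodMor (pair (D g) (p2 ≫ g)) (𝟙 X) ≫ prodMor p1 (𝟙 X) =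
      prodMor (D g) (𝟙 X) := by
    apply pair_ext <;>
      simp [prodMor, comp_pair, Category.assoc]
  calc D (curry f) = D g := rfl
    _ = curry (prodMor (D g) (𝟙 X) ≫ ev) := (curry_uncurry _).symm
    _ = curry (pair (prodMor p1 (0 : X ⟶ X)) (prodMor p2 (𝟙 X)) ≫ D f) := by
        rw [← hB, Category.assoc, hev, ← Category.assoc, ← hA, Category.assoc,
          ← D5, ← h1]

/-- A cartesian closed differential category is a differential λ-category,
i.e. `D(curry(f)) = curry(D(f)∘⟨π₁×0, π₂×id⟩)` for all `f`, if and only if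
every evaluation morphism satisfies `ev∘(π₁×id) = D(ev)∘⟨π₁×0, π₂×id⟩`. -/
theorem diff_lambda_iff_ev {C : Type u} [Category.{v} C] [CCDC C] :
    (∀ (Z X Y : C) (f : P Z X ⟶ Y),
        D (curry f) =
          curry (pair (prodMor p1 (0 : X ⟶ X)) (prodMor p2 (𝟙 X)) ≫ D f)) ↔
    (∀ (X Y : C),
        prodMor (p1 : P (exp X Y) (exp X Y) ⟶ exp X Y) (𝟙 X) ≫ ev =
          pair (prodMor p1 (0 : X ⟶ X)) (prodMor p2 (𝟙 X)) ≫
            D (ev (X := X) (Y := Y))) := by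
  constructor
  · intro h X Y
    have hc : curry (ev (X := X) (Y := Y)) = 𝟙 (exp X Y) := by
      have := curry_uncurry (𝟙 (exp X Y))
      rwa [prodMor, Category.comp_id, Category.comp_id, pair_p1_p2,
        Category.id_comp] at this
    have h2 := h (exp X Y) X Y ev
    rw [hc, D3] at h2
    have h3 := uncurry_curry
      (pair (prodMor p1 (0 : X ⟶ X)) (prodMor p2 (𝟙 X)) ≫ D (ev (X := X) (Y := Y)))
    rwa [← h2] at h3
  · exact fun hev => diff_lambda_of_ev hev
end
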